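/- For the Cartesian product of two path graphs on N₁ and N₂ vertices (N₁, N₂ even), any real function φ with Σφ = 0 and φ ≠ 0 satisfies the Laplacian Rayleigh quotient bound E_φ ≥ 2/((2(N₁+N₂)+1)(2·max(N₁,N₂)+1)). -/

import Mathlib

open scoped Classical BigOperators

/-- Rayleigh numerator of the graph Laplacian: `∑_{i∼i'} (f i - f i')²`. -/
noncomputable def lapNum {V : Type*} [Fintype V] (G : SimpleGraph V) (f : V → ℝ) : ℝ :=
  (∑ i, ∑ j, if G.Adj i j then (f i - f j) ^ 2 else 0) / 2

/-!
For mean-zero `φ` on `n` vertices, `∑_{i,j} (φ i - φ j)² = 2n ∑ φ²`. Split each difference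
`φ(a,b) - φ(a',b')` at the corner `(a',b)` into a leg inside a copy of the first factor and a leg
inside a copy of the second. Along a path in a connected graph on `m` vertices, telescoping and
Cauchy–Schwarz bound the squared difference of the endpoint values by `(m - 1)` times the energy of
the path, which is at most the Laplacian energy. Summing over all pairs gives
`∑ φ² ≤ max (N₁(N₁-1)) (N₂(N₂-1)) · lapNum φ`, which is stronger than the claimed bound.
-/

theorem lapNum_nonneg {V : Type*} [Fintype V] (G : SimpleGraph V) (f : V → ℝ) :
    0 ≤ lapNum G f := by
  unfold lapNum; positivity

theorem sum_sum_sq_sub_eq {ι R : Type*} [Fintype ι] [CommRing R] (f : ι → R) :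
    ∑ i, ∑ j, (f i - f j) ^ 2 = 2 * (Fintype.card ι * ∑ i, f i ^ 2 - (∑ i, f i) ^ 2) := by
  simp only [sub_sq, Finset.sum_add_distrib, Finset.sum_sub_distrib, Finset.sum_const,
    Finset.card_univ, nsmul_eq_mul, mul_assoc, ← Finset.mul_sum, ← Finset.sum_mul, sq (∑ i, f i)]
  ring

theorem lapNum_boxProd {α β : Type*} [Fintype α] [Fintype β] (G : SimpleGraph α)
    (H : SimpleGraph β) (f : α × β → ℝ) :
    lapNum (G □ H) f = ∑ b, lapNum G (fun a => f (a, b)) + ∑ a, lapNum H (fun b => f (a, b)) := by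
  have hsplit : ∀ i j : α × β, (if (G □ H).Adj i j then (f i - f j) ^ 2 else 0) =
      (if i.2 = j.2 then if G.Adj i.1 j.1 then (f i - f j) ^ 2 else 0 else 0) +
      (if i.1 = j.1 then if H.Adj i.2 j.2 then (f i - f j) ^ 2 else 0 else 0) := by
    rintro ⟨a, b⟩ ⟨a', b'⟩
    rw [SimpleGraph.boxProd_adj]
    by_cases ha : a = a' <;> by_cases hb : b = b' <;> simp_all
  simp only [lapNum, ← Finset.sum_div, ← add_div, hsplit, Finset.sum_add_distrib,
    Fintype.sum_prod_type]
  congr 2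
  · rw [Finset.sum_comm]
    simp
  · refine Finset.sum_congr rfl fun a _ => ?_
    rw [Finset.sum_comm]
    simp

namespace SimpleGraph

variable {V : Type*} {G : SimpleGraph V} {u v : V}

theorem Walk.sub_eq_sum_darts {M : Type*} [AddCommGroup M] (p : G.Walk u v) (f : V → M) :
    f u - f v = (p.darts.map fun d => f d.fst - f d.snd).sum := by
  induction p with
  | nil => simp
  | cons _ p ih => rw [darts_cons, List.map_cons, List.sum_cons, ← ih]; abel

theorem Walk.IsTrail.sum_darts_sq_le_lapNum [Fintype V] {p : G.Walk u v} (hp : p.IsTrail)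
    (f : V → ℝ) : (p.darts.map fun d => (f d.fst - f d.snd) ^ 2).sum ≤ lapNum G f := by
  set k : V × V → ℝ := fun q => if G.Adj q.1 q.2 then (f q.1 - f q.2) ^ 2 else 0
  set L := p.darts.map Dart.toProd
  set T := L.toFinset
  have hLedges : (L.map fun q => s(q.1, q.2)).Nodup := by
    rw [List.map_map]; exact hp.edges_nodup
  have hL : L.Nodup := hLedges.of_map _
  have hsum : (p.darts.map fun d => (f d.fst - f d.snd) ^ 2).sum = ∑ q ∈ T, k q := by
    rw [List.sum_toFinset _ hL, List.map_map]
    refine congrArg List.sum (List.map_congr_left fun d _ => ?_)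
    simp [k, d.adj]
  have hk_swap : ∀ q, k q.swap = k q := fun q => by
    simp only [k, Prod.fst_swap, Prod.snd_swap, G.adj_comm q.2 q.1]
    rw [← neg_sub, neg_sq]
  -- A trail never uses an edge twice, so `T` and its reversal are disjoint sets of ordered pairs.
  have hdisj : Disjoint T (T.image Prod.swap) := by
    refine Finset.disjoint_left.mpr fun q hq hq' => ?_
    obtain ⟨q', hq'T, rfl⟩ := Finset.mem_image.mp hq'
    rw [List.mem_toFinset] at hq hq'T
    have hqq : q' = q'.swap :=
      List.inj_on_of_nodup_map hLedges hq'T hq Sym2.eq_swap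
    obtain ⟨d, -, rfl⟩ := List.mem_map.mp hq'T
    exact d.fst_ne_snd (congrArg Prod.fst hqq)
  have hswap_sum : ∑ q ∈ T.image Prod.swap, k q = ∑ q ∈ T, k q := by
    rw [Finset.sum_image (fun _ _ _ _ h => Prod.swap_injective h)]
    exact Finset.sum_congr rfl fun q _ => hk_swap q
  have hk0 : ∀ q, 0 ≤ k q := fun q => by positivity
  have htotal : ∑ q, k q = 2 * lapNum G f := by
    rw [lapNum, Fintype.sum_prod_type]; ring
  have htwice : 2 * ∑ q ∈ T, k q ≤ 2 * lapNum G f := by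
    calc 2 * ∑ q ∈ T, k q = ∑ q ∈ T ∪ T.image Prod.swap, k q := by
          rw [Finset.sum_union hdisj, hswap_sum]; ring
      _ ≤ ∑ q, k q := Finset.sum_le_univ_sum_of_nonneg hk0
      _ = 2 * lapNum G f := htotal
  rw [hsum]; linarith

theorem Walk.IsPath.sq_sub_le_length_mul_lapNum [Fintype V] {p : G.Walk u v} (hp : p.IsPath)
    (f : V → ℝ) : (f u - f v) ^ 2 ≤ p.length * lapNum G f := by
  have hnd : p.darts.Nodup := darts_nodup_of_support_nodup hp.support_nodup
  calc (f u - f v) ^ 2 = (∑ d ∈ p.darts.toFinset, (f d.fst - f d.snd)) ^ 2 := by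
        rw [p.sub_eq_sum_darts, List.sum_toFinset _ hnd]
    _ ≤ p.darts.toFinset.card * ∑ d ∈ p.darts.toFinset, (f d.fst - f d.snd) ^ 2 :=
        sq_sum_le_card_mul_sum_sq
    _ ≤ p.length * lapNum G f := by
        rw [List.toFinset_card_of_nodup hnd, length_darts, List.sum_toFinset _ hnd]
        exact mul_le_mul_of_nonneg_left (hp.isTrail.sum_darts_sq_le_lapNum f) (by positivity)

theorem Preconnected.sq_sub_le_mul_lapNum [Fintype V] (hG : G.Preconnected) (f : V → ℝ)
    (u v : V) : (f u - f v) ^ 2 ≤ (Fintype.card V - 1) * lapNum G f := by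
  obtain ⟨q, hq⟩ := (hG u v).some.toPath
  have hlen : (q.length : ℝ) ≤ Fintype.card V - 1 := by
    rw [le_sub_iff_add_le]; exact_mod_cast hq.length_lt
  exact (hq.sq_sub_le_length_mul_lapNum f).trans
    (mul_le_mul_of_nonneg_right hlen (lapNum_nonneg G f))

end SimpleGraph

open Fintype in
theorem sq_sub_le_lapNum_boxProd {α β : Type*} [Fintype α] [Fintype β]
    {G : SimpleGraph α} {H : SimpleGraph β} (hG : G.Preconnected) (hH : H.Preconnected)
    (f : α × β → ℝ) (i j : α × β) :
    (f i - f j) ^ 2 ≤ 2 * (card α - 1) * lapNum G (fun a => f (a, i.2)) +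
      2 * (card β - 1) * lapNum H (fun b => f (j.1, b)) := by
  have h₁ := hG.sq_sub_le_mul_lapNum (fun a => f (a, i.2)) i.1 j.1
  have h₂ := hH.sq_sub_le_mul_lapNum (fun b => f (j.1, b)) i.2 j.2
  have hcorner : (f i - f j) ^ 2 ≤ 2 * (f i - f (j.1, i.2)) ^ 2 + 2 * (f (j.1, i.2) - f j) ^ 2 := by
    nlinarith [sq_nonneg (f i - 2 * f (j.1, i.2) + f j)]
  linarith

open Fintype in
theorem sum_sq_le_mul_lapNum_boxProd {α β : Type*} [Fintype α] [Fintype β]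
    {G : SimpleGraph α} {H : SimpleGraph β} (hG : G.Preconnected) (hH : H.Preconnected)
    {f : α × β → ℝ} (hf : ∑ i, f i = 0) :
    ∑ i, f i ^ 2 ≤
      max (card α * (card α - 1 : ℝ)) (card β * (card β - 1 : ℝ)) * lapNum (G □ H) f := by
  set R : β → ℝ := fun b => lapNum G fun a => f (a, b)
  set C : α → ℝ := fun a => lapNum H fun b => f (a, b)
  set K := max (card α * (card α - 1 : ℝ)) (card β * (card β - 1 : ℝ))
  have hK₁ : card α * (card α - 1 : ℝ) ≤ K := le_max_left _ _
  have hK₂ : card β * (card β - 1 : ℝ) ≤ K := le_max_right _ _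
  have hR : ∀ b, 0 ≤ R b := fun b => lapNum_nonneg _ _
  have hC : ∀ a, 0 ≤ C a := fun a => lapNum_nonneg _ _
  have key : 2 * (card α * card β : ℝ) * ∑ i, f i ^ 2 ≤
      2 * (card α * card β : ℝ) * (K * lapNum (G □ H) f) := by
    calc 2 * (card α * card β : ℝ) * ∑ i, f i ^ 2 = ∑ i, ∑ j, (f i - f j) ^ 2 := by
          rw [sum_sum_sq_sub_eq, hf, card_prod]; push_cast; ring
      _ ≤ ∑ i : α × β, ∑ j : α × β, (2 * (card α - 1) * R i.2 + 2 * (card β - 1) * C j.1) :=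
          Finset.sum_le_sum fun i _ => Finset.sum_le_sum fun j _ => sq_sub_le_lapNum_boxProd hG hH f i j
      _ = 2 * (card α * card β : ℝ) *
            (card α * (card α - 1) * ∑ b, R b + card β * (card β - 1) * ∑ a, C a) := by
          simp only [Finset.sum_add_distrib, Finset.sum_const, Finset.card_univ, nsmul_eq_mul,
            Fintype.sum_prod_type, ← Finset.mul_sum, card_prod, Nat.cast_mul]
          ring
      _ ≤ 2 * (card α * card β : ℝ) * (K * ∑ b, R b + K * ∑ a, C a) := by
          gcongr
          · exact Finset.sum_nonneg fun b _ => hR b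
          · exact Finset.sum_nonneg fun a _ => hC a
      _ = 2 * (card α * card β : ℝ) * (K * lapNum (G □ H) f) := by
          rw [lapNum_boxProd]; ring
  rcases isEmpty_or_nonempty (α × β) with hempty | _
  · simp [lapNum]
  · have : (0 : ℝ) < 2 * (card α * card β) := by
      rw [← Nat.cast_mul, ← card_prod]; positivity
    exact le_of_mul_le_mul_left key this

theorem grid2_rayleigh_bound_general (N₁ N₂ : ℕ)
    (φ : Fin N₁ × Fin N₂ → ℝ) (hφ0 : ∑ i, φ i = 0) (hφne : φ ≠ 0) :
    2 / ((2 * ((N₁ : ℝ) + N₂) + 1) * (2 * (max N₁ N₂ : ℕ) + 1)) ≤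
      lapNum ((SimpleGraph.pathGraph N₁).boxProd (SimpleGraph.pathGraph N₂)) φ /
        ∑ i, (φ i) ^ 2 := by
  have hA : 0 < ∑ i, φ i ^ 2 := by
    obtain ⟨i, hi⟩ := Function.ne_iff.mp hφne
    exact Finset.sum_pos' (fun j _ => sq_nonneg _) ⟨i, Finset.mem_univ _, sq_pos_of_ne_zero hi⟩
  have hpoincare := sum_sq_le_mul_lapNum_boxProd (SimpleGraph.pathGraph_preconnected N₁)
    (SimpleGraph.pathGraph_preconnected N₂) hφ0
  simp only [Fintype.card_fin] at hpoincare
  have hconst : 2 * max (N₁ * (N₁ - 1 : ℝ)) (N₂ * (N₂ - 1 : ℝ)) ≤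
      (2 * ((N₁ : ℝ) + N₂) + 1) * (2 * (max N₁ N₂ : ℕ) + 1) := by
    have h₁ : (N₁ : ℝ) ≤ (max N₁ N₂ : ℕ) := by exact_mod_cast le_max_left N₁ N₂
    have h₂ : (N₂ : ℝ) ≤ (max N₁ N₂ : ℕ) := by exact_mod_cast le_max_right N₁ N₂
    rw [mul_max_of_nonneg _ _ zero_le_two, max_le_iff]
    constructor <;> nlinarith [Nat.cast_nonneg (α := ℝ) N₁, Nat.cast_nonneg (α := ℝ) N₂]
  rw [div_le_div_iff₀ (by positivity) hA]
  nlinarith [lapNum_nonneg ((SimpleGraph.pathGraph N₁).boxProd (SimpleGraph.pathGraph N₂)) φ]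

/-- **Example 2: 2-dimensional chain.**  For the Cartesian (box) product of two path
graphs on `N₁` and `N₂` vertices (`N₁, N₂` even), any nonzero mean-zero real function `φ`
satisfies `E_φ ≥ 2 / ((2(N₁+N₂)+1)(2 max(N₁,N₂)+1))`. -/
theorem grid2_rayleigh_bound (N₁ N₂ : ℕ) (h₁ : Even N₁) (h₂ : Even N₂)
    (φ : Fin N₁ × Fin N₂ → ℝ) (hφ0 : ∑ i, φ i = 0) (hφne : φ ≠ 0) :
    2 / ((2 * ((N₁ : ℝ) + N₂) + 1) * (2 * (max N₁ N₂ : ℕ) + 1)) ≤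
      lapNum ((SimpleGraph.pathGraph N₁).boxProd (SimpleGraph.pathGraph N₂)) φ /
        ∑ i, (φ i) ^ 2 :=
  grid2_rayleigh_bound_general N₁ N₂ φ hφ0 hφne
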